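/- Suppose that for μ-almost every s, the function f(·,s) is C² on a neighborhood of λ-almost every point of ℝ^d. Then the set Γ^c of step sizes γ > 0 for which the lazy-SGD kernel P_γ fails to preserve Lebesgue-absolute continuity is Lebesgue negligible in (0,∞). -/

import Mathlib

/-!
A step size `γ` can only fail when, for `s` in a `μ`-positive set, the step map
`x ↦ x - γ ∇f(x, s)` has singular Jacobian `1 - γ H(x, s)` on a Lebesgue-positive set of `x`:
elsewhere it is a local `C¹` diffeomorphism, so by the inverse function theorem and a countable
cover it pulls Lebesgue-null sets back to null sets. For each fixed `(s, x)`, `det (1 - γ H)` is a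
polynomial in `γ` with value `1` at `0`, so it vanishes for finitely many `γ` only, and Fubini
makes the set of bad `γ` null. Fubini needs a jointly measurable Hessian: `H` is replaced by
iterated `limsup`s of difference quotients, which agree with it wherever `f(·, s)` is `C²`.
-/

open MeasureTheory Filter Set
open scoped Classical

noncomputable def lazyGrad {d : ℕ} {Ξ : Type*}
    (f : EuclideanSpace ℝ (Fin d) × Ξ → ℝ)
    (x : EuclideanSpace ℝ (Fin d)) (s : Ξ) : EuclideanSpace ℝ (Fin d) :=
  if DifferentiableAt ℝ (fun y => f (y, s)) x then gradient (fun y => f (y, s)) x else 0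

/-- `γ ∈ Γ`: the lazy-SGD kernel `P_γ` preserves Lebesgue-absolute continuity. -/
def StepOK {d : ℕ} {Ξ : Type*} [MeasurableSpace Ξ] (μ : Measure Ξ)
    (f : EuclideanSpace ℝ (Fin d) × Ξ → ℝ) (γ : ℝ) : Prop :=
  ∀ ρ : Measure (EuclideanSpace ℝ (Fin d)), IsProbabilityMeasure ρ → ρ ≪ volume →
    (ρ.prod μ).map (fun p => p.1 - γ • lazyGrad f p.1 p.2) ≪ volume

open Topology

section DiffQuot

variable {E : Type*} [NormedAddCommGroup E] [NormedSpace ℝ E]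

/-- Defined everywhere and measurable in all arguments, unlike `fderiv` of a family of
functions indexed by a bare measurable space. -/
noncomputable def limsupDiffQuot (h : E → ℝ) (x v : E) : ℝ :=
  limsup (fun n : ℕ => (n : ℝ) * (h (x + (n : ℝ)⁻¹ • v) - h x)) atTop

theorem HasFDerivAt.limsupDiffQuot_eq {h : E → ℝ} {L : E →L[ℝ] ℝ} {x : E}
    (hh : HasFDerivAt h L x) (v : E) : limsupDiffQuot h x v = L v := by
  have hslope : Tendsto (slope (fun t : ℝ => h (x + t • v)) 0) (𝓝[≠] 0) (𝓝 (L v)) :=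
    hasDerivAt_iff_tendsto_slope.1 (hh.hasLineDerivAt v)
  have hinv : Tendsto (fun n : ℕ => (n : ℝ)⁻¹) atTop (𝓝[≠] 0) :=
    (tendsto_inv_atTop_nhdsGT_zero.comp tendsto_natCast_atTop_atTop).mono_right
      (nhdsWithin_mono _ fun _ ht => ne_of_gt ht)
  refine ((hslope.comp hinv).congr' ?_).limsup_eq
  filter_upwards [eventually_gt_atTop 0] with n hn
  simp only [Function.comp_apply, slope_def_field, sub_zero, zero_smul, add_zero]
  field_simp

theorem Filter.EventuallyEq.limsupDiffQuot_eq {h g : E → ℝ} {x : E} (hev : h =ᶠ[𝓝 x] g)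
    (v : E) : limsupDiffQuot h x v = limsupDiffQuot g x v := by
  have hx : Tendsto (fun n : ℕ => x + (n : ℝ)⁻¹ • v) atTop (𝓝 x) := by
    simpa using tendsto_const_nhds.add
      ((tendsto_inv_atTop_zero.comp (tendsto_natCast_atTop_atTop (R := ℝ))).smul_const v)
  refine limsup_congr ?_
  filter_upwards [hx.eventually hev] with n hn
  rw [hn, hev.eq_of_nhds]

theorem measurable_limsupDiffQuot {Ξ : Type*} [MeasurableSpace Ξ] [MeasurableSpace E]
    [MeasurableAdd E] {h : E × Ξ → ℝ} (hh : Measurable h) (v : E) :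
    Measurable fun p : E × Ξ => limsupDiffQuot (fun y => h (y, p.2)) p.1 v :=
  Measurable.limsup fun _ => measurable_const.mul
    ((hh.comp ((measurable_fst.add_const _).prodMk measurable_snd)).sub hh)

end DiffQuot

section Hessian

variable {ι : Type*} [Fintype ι] [DecidableEq ι]

theorem gradient_apply_euclideanSpace (φ : EuclideanSpace ℝ ι → ℝ) (x : EuclideanSpace ℝ ι)
    (i : ι) : gradient φ x i = fderiv ℝ φ x (EuclideanSpace.single i 1) := by
  rw [← inner_gradient_left, EuclideanSpace.inner_single_right]
  simp

theorem ContDiffAt.gradient_euclideanSpace {φ : EuclideanSpace ℝ ι → ℝ} {x : EuclideanSpace ℝ ι}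
    {m n : WithTop ℕ∞} (hφ : ContDiffAt ℝ n φ x) (hmn : m + 1 ≤ n) :
    ContDiffAt ℝ m (gradient φ) x := by
  refine (contDiffAt_piLp 2).2 fun i => ?_
  simp_rw [gradient_apply_euclideanSpace]
  exact (hφ.fderiv_right hmn).clm_apply contDiffAt_const

noncomputable def diffQuotHessian (φ : EuclideanSpace ℝ ι → ℝ) (x : EuclideanSpace ℝ ι) :
    Matrix ι ι ℝ :=
  Matrix.of fun i j => limsupDiffQuot (fun y => limsupDiffQuot φ y (EuclideanSpace.single i 1))
    x (EuclideanSpace.single j 1)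

theorem measurable_diffQuotHessian_apply {Ξ : Type*} [MeasurableSpace Ξ]
    {f : EuclideanSpace ℝ ι × Ξ → ℝ} (hf : Measurable f) (i j : ι) :
    Measurable fun p : EuclideanSpace ℝ ι × Ξ => diffQuotHessian (fun y => f (y, p.2)) p.1 i j :=
  measurable_limsupDiffQuot (measurable_limsupDiffQuot hf _) _

theorem ContDiffAt.diffQuotHessian_eq {φ : EuclideanSpace ℝ ι → ℝ} {x : EuclideanSpace ℝ ι}
    (hφ : ContDiffAt ℝ 2 φ x) :
    diffQuotHessian φ x = LinearMap.toMatrix (EuclideanSpace.basisFun ι ℝ).toBasis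
      (EuclideanSpace.basisFun ι ℝ).toBasis (fderiv ℝ (gradient φ) x) := by
  ext i j
  have hgrad : (fun y => limsupDiffQuot φ y (EuclideanSpace.single i 1)) =ᶠ[𝓝 x]
      fun y => gradient φ y i := by
    filter_upwards [hφ.eventually (by simp)] with y hy
    rw [(hy.differentiableAt (by simp)).hasFDerivAt.limsupDiffQuot_eq,
      gradient_apply_euclideanSpace]
  have hD : HasFDerivAt (fun y => gradient φ y i)
      ((EuclideanSpace.proj i).comp (fderiv ℝ (gradient φ) x)) x :=
    (EuclideanSpace.proj (𝕜 := ℝ) i).hasFDerivAt.comp x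
      ((hφ.gradient_euclideanSpace (m := 1) (by norm_num)).differentiableAt
        one_ne_zero).hasFDerivAt
  rw [diffQuotHessian, Matrix.of_apply, hgrad.limsupDiffQuot_eq, hD.limsupDiffQuot_eq,
    LinearMap.toMatrix_apply]
  simp

end Hessian

theorem ContinuousLinearMap.det_id_sub_smul {R M : Type*} [CommRing R] [TopologicalSpace M]
    [AddCommGroup M] [Module R M] [IsTopologicalAddGroup M] [ContinuousConstSMul R M]
    {ι : Type*} [Fintype ι] [DecidableEq ι] (b : Module.Basis ι R M)
    (A : M →L[R] M) (γ : R) :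
    (ContinuousLinearMap.id R M - γ • A).det = (1 - γ • LinearMap.toMatrix b b A).det := by
  rw [ContinuousLinearMap.det, ← LinearMap.det_toMatrix b]
  simp

theorem Matrix.det_one_sub_smul_eq_eval_charpolyRev {ι R : Type*} [Fintype ι] [DecidableEq ι]
    [CommRing R] (M : Matrix ι ι R) (γ : R) :
    (1 - γ • M).det = M.charpolyRev.eval γ := by
  rw [Matrix.charpolyRev, ← Polynomial.coe_evalRingHom, RingHom.map_det]
  congr 1
  ext i j
  simp [Matrix.one_apply, apply_ite (Polynomial.eval γ)]
  ring

theorem Matrix.finite_setOf_det_one_sub_smul_eq_zero {ι R : Type*} [Fintype ι] [DecidableEq ι]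
    [CommRing R] [IsDomain R] (M : Matrix ι ι R) :
    {γ : R | (1 - γ • M).det = 0}.Finite := by
  simp_rw [Matrix.det_one_sub_smul_eq_eval_charpolyRev]
  exact Polynomial.finite_setOfPred_isRoot fun h => by simpa [h] using M.eval_charpolyRev

theorem Matrix.measurable_det {ι α R : Type*} [Fintype ι] [DecidableEq ι] [MeasurableSpace α]
    [CommRing R] [MeasurableSpace R] [MeasurableAdd₂ R] [MeasurableMul₂ R]
    {M : α → Matrix ι ι R} (hM : ∀ i j, Measurable fun a => M a i j) :
    Measurable fun a => (M a).det := by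
  simp_rw [Matrix.det_apply']
  exact Finset.measurable_sum _ fun σ _ =>
    (Finset.measurable_prod _ fun i _ => hM (σ i) i).const_mul _

theorem ae_ae_det_one_sub_smul_ne_zero {ι α : Type*} [Fintype ι] [DecidableEq ι]
    [MeasurableSpace α] (ν : Measure α) [SFinite ν] {M : α → Matrix ι ι ℝ}
    (hM : ∀ i j, Measurable fun a => M a i j) :
    ∀ᵐ γ : ℝ, ∀ᵐ a ∂ν, (1 - γ • M a).det ≠ 0 := by
  have hdet : Measurable fun q : α × ℝ => (1 - q.2 • M q.1).det := by
    refine Matrix.measurable_det fun i j => ?_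
    simp only [Matrix.sub_apply, Matrix.smul_apply, smul_eq_mul]
    exact measurable_const.sub (measurable_snd.mul ((hM i j).comp measurable_fst))
  have hset : MeasurableSet {q : α × ℝ | (1 - q.2 • M q.1).det ≠ 0} :=
    hdet (measurableSet_singleton 0).compl
  refine (Measure.ae_ae_comm hset).1 (Eventually.of_forall fun a => ?_)
  simpa only [ae_iff, not_not] using
    (M a).finite_setOf_det_one_sub_smul_eq_zero.measure_zero volume

section LocalInverse

variable {E : Type*} [NormedAddCommGroup E] [NormedSpace ℝ E] [FiniteDimensional ℝ E]
  [MeasurableSpace E] [BorelSpace E] (μ : Measure E) [μ.IsAddHaarMeasure]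

theorem ContDiffAt.exists_mem_nhds_measure_inter_preimage_eq_zero {g : E → E} {x : E}
    (hg : ContDiffAt ℝ 1 g x) (hdet : (fderiv ℝ g x).det ≠ 0) {N : Set E} (hN : μ N = 0) :
    ∃ V ∈ 𝓝 x, μ (V ∩ g ⁻¹' N) = 0 := by
  have he : HasFDerivAt g
      ((fderiv ℝ g x).toContinuousLinearEquivOfDetNeZero hdet : E →L[ℝ] E) x := by
    simpa using (hg.differentiableAt one_ne_zero).hasFDerivAt
  set g' := hg.localInverse he one_ne_zero
  have hleft : ∀ᶠ y in 𝓝 x, g' (g y) = y :=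
    (hg.hasStrictFDerivAt' he one_ne_zero).eventually_left_inverse
  obtain ⟨W, hW, hg'W⟩ := (hg.to_localInverse he one_ne_zero).contDiffOn le_rfl (by simp)
  refine ⟨{y | g' (g y) = y} ∩ g ⁻¹' W, inter_mem hleft (hg.continuousAt.preimage_mem_nhds hW),
    measure_mono_null ?_ (addHaar_image_eq_zero_of_differentiableOn_of_addHaar_eq_zero μ
      ((hg'W.differentiableOn one_ne_zero).mono inter_subset_right)
      (measure_mono_null inter_subset_left hN))⟩
  rintro y ⟨⟨hy, hyW⟩, hyN⟩
  exact ⟨g y, ⟨hyN, hyW⟩, hy⟩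

theorem addHaar_preimage_eq_zero_of_ae_contDiffAt {g : E → E}
    (hg : ∀ᵐ x ∂μ, ContDiffAt ℝ 1 g x ∧ (fderiv ℝ g x).det ≠ 0) {N : Set E} (hN : μ N = 0) :
    μ (g ⁻¹' N) = 0 := by
  rw [← measure_sdiff_null (ae_iff.1 hg)]
  refine measure_null_of_locally_null _ ?_
  rintro x ⟨-, hx⟩
  obtain ⟨hgx, hdet⟩ := not_not.1 hx
  obtain ⟨V, hV, hVN⟩ := hgx.exists_mem_nhds_measure_inter_preimage_eq_zero μ hdet hN
  refine ⟨_, inter_mem_nhdsWithin _ hV, measure_mono_null ?_ hVN⟩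
  exact fun y hy => ⟨hy.2, hy.1.1⟩

end LocalInverse

theorem MeasureTheory.Measure.map_prod_absolutelyContinuous {X Ξ Y : Type*} [MeasurableSpace X]
    [MeasurableSpace Ξ] [MeasurableSpace Y] {ρ : Measure X} {μ : Measure Ξ} [SFinite ρ]
    [SFinite μ] {ν : Measure Y} {G : X × Ξ → Y}
    (hG : ∀ N, MeasurableSet N → ν N = 0 → ∀ᵐ s ∂μ, ρ {x | G (x, s) ∈ N} = 0) :
    (ρ.prod μ).map G ≪ ν := by
  refine Measure.AbsolutelyContinuous.mk fun N hNm hN => ?_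
  by_cases hGm : AEMeasurable G (ρ.prod μ)
  swap
  · simp [Measure.map_of_not_aemeasurable hGm]
  rw [Measure.map_apply_of_aemeasurable hGm hNm]
  obtain ⟨t, hts, htm, hteq⟩ := (hGm.nullMeasurable hNm).exists_measurable_subset_ae_eq
  rw [← measure_congr hteq, ← Measure.prod_swap, Measure.map_apply measurable_swap htm,
    Measure.measure_prod_null (measurable_swap htm)]
  filter_upwards [hG N hNm hN] with s hs
  exact measure_mono_null (fun x hx => hts hx) hs

theorem lazyGrad_eventuallyEq_gradient {d : ℕ} {Ξ : Type*}
    {f : EuclideanSpace ℝ (Fin d) × Ξ → ℝ} {s : Ξ} {x : EuclideanSpace ℝ (Fin d)}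
    (hf : ∀ᶠ y in 𝓝 x, DifferentiableAt ℝ (fun y => f (y, s)) y) :
    (fun y => lazyGrad f y s) =ᶠ[𝓝 x] gradient fun y => f (y, s) :=
  hf.mono fun _ hy => if_pos hy

theorem volume_preimage_lazyStep_eq_zero {d : ℕ} {Ξ : Type*}
    {f : EuclideanSpace ℝ (Fin d) × Ξ → ℝ} {s : Ξ} {γ : ℝ}
    (hC2 : ∀ᵐ x ∂(volume : Measure (EuclideanSpace ℝ (Fin d))),
      ∃ U ∈ 𝓝 x, ContDiffOn ℝ 2 (fun y => f (y, s)) U)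
    (hdet : ∀ᵐ x ∂(volume : Measure (EuclideanSpace ℝ (Fin d))),
      (1 - γ • diffQuotHessian (fun y => f (y, s)) x).det ≠ 0)
    {N : Set (EuclideanSpace ℝ (Fin d))} (hN : volume N = 0) :
    volume {x | x - γ • lazyGrad f x s ∈ N} = 0 := by
  refine addHaar_preimage_eq_zero_of_ae_contDiffAt volume ?_ hN
  filter_upwards [hC2, hdet] with x ⟨U, hU, hφU⟩ hx
  have hφ : ContDiffAt ℝ 2 (fun y => f (y, s)) x := hφU.contDiffAt hU
  have hgrad := hφ.gradient_euclideanSpace (m := 1) (by norm_num)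
  have hstep : (fun y => y - γ • lazyGrad f y s) =ᶠ[𝓝 x]
      fun y => y - γ • gradient (fun y => f (y, s)) y :=
    (lazyGrad_eventuallyEq_gradient ((hφ.eventually (by simp)).mono fun y hy =>
      hy.differentiableAt (by simp))).mono fun y hy => congrArg (y - γ • ·) hy
  refine ⟨(contDiffAt_id.sub (hgrad.const_smul γ)).congr_of_eventuallyEq hstep, ?_⟩
  have hGx := hgrad.differentiableAt one_ne_zero
  rwa [hstep.fderiv_eq, fderiv_fun_sub differentiableAt_fun_id (by fun_prop), fderiv_fun_id,
    fderiv_fun_const_smul hGx, ContinuousLinearMap.det_id_sub_smul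
      (EuclideanSpace.basisFun (Fin d) ℝ).toBasis, ← hφ.diffQuotHessian_eq]

theorem stmt6_general {d : ℕ} {Ξ : Type*} [MeasurableSpace Ξ]
    (μ : Measure Ξ) [IsProbabilityMeasure μ]
    (f : EuclideanSpace ℝ (Fin d) × Ξ → ℝ)
    (hf : Measurable f)
    (hC2 : ∀ᵐ s ∂μ, ∀ᵐ x ∂(volume : Measure (EuclideanSpace ℝ (Fin d))),
      ∃ U ∈ nhds x, ContDiffOn ℝ 2 (fun y => f (y, s)) U) :
    (volume : Measure ℝ) {γ : ℝ | 0 < γ ∧ ¬ StepOK μ f γ} = 0 := by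
  have hgood : ∀ᵐ γ : ℝ, ∀ᵐ s ∂μ, ∀ᵐ x ∂(volume : Measure (EuclideanSpace ℝ (Fin d))),
      (1 - γ • diffQuotHessian (fun y => f (y, s)) x).det ≠ 0 :=
    (ae_ae_det_one_sub_smul_ne_zero (μ.prod volume) fun i j =>
      (measurable_diffQuotHessian_apply hf i j).comp measurable_swap).mono
      fun _ hγ => Measure.ae_ae_of_ae_prod hγ
  have hstable : ∀ᵐ γ : ℝ, StepOK μ f γ := by
    filter_upwards [hgood] with γ hγ ρ _ hρ
    refine Measure.map_prod_absolutelyContinuous fun N _ hN => ?_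
    filter_upwards [hγ, hC2] with s hdet hs
    exact hρ (volume_preimage_lazyStep_eq_zero hs hdet hN)
  exact measure_mono_null (fun γ hγ => hγ.2) (ae_iff.1 hstable)

/-- if for `μ`-a.e. `s`, `f(·,s)` is `C²` on a neighborhood of `λ`-a.e.
point of `ℝ^d`, then the set of step sizes `γ > 0` failing to preserve
Lebesgue-absolute continuity is Lebesgue negligible. -/
theorem stmt6 {d : ℕ} {Ξ : Type*} [MeasurableSpace Ξ]
    (μ : Measure Ξ) [IsProbabilityMeasure μ]
    (f : EuclideanSpace ℝ (Fin d) × Ξ → ℝ)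
    (hf : Measurable f)
    (hlip : ∀ s : Ξ, LocallyLipschitz (fun y => f (y, s)))
    (hC2 : ∀ᵐ s ∂μ, ∀ᵐ x ∂(volume : Measure (EuclideanSpace ℝ (Fin d))),
      ∃ U ∈ nhds x, ContDiffOn ℝ 2 (fun y => f (y, s)) U) :
    (volume : Measure ℝ) {γ : ℝ | 0 < γ ∧ ¬ StepOK μ f γ} = 0 :=
  stmt6_general μ f hf hC2
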